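/- Let η_{st} denote the (s,t) entry of adj(C) = n·C^{−1}. For arbitrary integers a, b, c and arbitrary integers f_1, …, f_r, g_1, …, g_r, define rational numbers e_t = (1/n)·(a·j_t + b·i_t + c·(n − i_t − j_t) − Σ_{s=1}^r (g_s − f_s)·η_{st}) for 1 ≤ t ≤ r, and set e_0 = b, e_{r+1} = a. Then e_{t−1} − b_t·e_t + e_{t+1} = g_t − f_t − (b_t − 2)·c for every 1 ≤ t ≤ r. -/

import Mathlib

/-!
Both `i` and `j` solve the recurrence `x (t - 1) + x (t + 1) = b t * x t`. Expanding `det C` along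
its first row gives the continuant recurrence, so `det C = i 0 = n`; the Casoratian
`i t * j (t + 1) - i (t + 1) * j t` is constant, so `j (r + 1) = n`.

Extend `S t = ∑ s, (g s - f s) * η s t` by zero at `t = 0` and `t = r + 1`. Its second difference
`S (t - 1) - b t * S t + S (t + 1)` is minus the `t`-th entry of `S ᵥ* C`, i.e. of `(g - f) ᵥ* adj C * C`,
which is `-n * (g t - f t)`. Thus `n * e t = a * j t + bb * i t + c * (n - i t - j t) - S t` for all
`0 ≤ t ≤ r + 1`, and taking second differences, the constant `n` contributes `(2 - b t) * n`.
-/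

open Matrix

variable {R : Type*} [CommRing R]

def tridiag (r : ℕ) (b : ℕ → R) : Matrix (Fin r) (Fin r) R :=
  Matrix.of fun s t => if s = t then b (s.1 + 1)
    else if s.1 + 1 = t.1 ∨ t.1 + 1 = s.1 then -1 else 0

def pad {r : ℕ} (v : Fin r → R) (u : ℕ) : R :=
  if h : 1 ≤ u ∧ u ≤ r then v ⟨u - 1, by omega⟩ else 0

lemma pad_zero {r : ℕ} (v : Fin r → R) : pad v 0 = 0 := by simp [pad]

lemma pad_of_lt {r : ℕ} (v : Fin r → R) {u : ℕ} (hu : r < u) : pad v u = 0 :=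
  dif_neg (by omega)

lemma pad_succ {r : ℕ} (v : Fin r → R) (t : Fin r) : pad v (t + 1) = v t := by
  simp [pad]

lemma sum_ite_succ_eq_pad {r : ℕ} (v : Fin r → R) (k : ℕ) :
    ∑ u : Fin r, (if u.1 + 1 = k then v u else 0) = pad v k := by
  unfold pad
  split_ifs with hk
  · rw [Finset.sum_eq_single_of_mem ⟨k - 1, by omega⟩ (Finset.mem_univ _)]
    · rw [if_pos (by simp; omega)]
    · intro u _ hu
      rw [if_neg (fun h => hu (Fin.ext (by simp; omega)))]
  · exact Finset.sum_eq_zero fun u _ => if_neg (by omega)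

lemma tridiag_mulVec_apply {r : ℕ} (b : ℕ → R) (v : Fin r → R) (t : Fin r) :
    (tridiag r b *ᵥ v) t = b (t + 1) * pad v (t + 1) - pad v t - pad v (t + 2) := by
  have hentry : ∀ u : Fin r, tridiag r b t u * v u = b (t + 1) * (if u.1 + 1 = t + 1 then v u else 0)
      - (if u.1 + 1 = t then v u else 0) - (if u.1 + 1 = t + 2 then v u else 0) := by
    intro u
    simp only [tridiag, of_apply, Fin.ext_iff]
    split_ifs <;> first | omega | ring
  simp only [mulVec, dotProduct, hentry, Finset.sum_sub_distrib, ← Finset.mul_sum,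
    sum_ite_succ_eq_pad]

lemma tridiag_transpose (r : ℕ) (b : ℕ → R) : (tridiag r b)ᵀ = tridiag r b := by
  ext s t
  simp only [tridiag, transpose_apply, of_apply, eq_comm (a := t), or_comm]
  split_ifs with h <;> simp [h]

lemma tridiag_submatrix_succ (r : ℕ) (b : ℕ → R) :
    (tridiag (r + 1) b).submatrix Fin.succ Fin.succ = tridiag r (fun u => b (u + 1)) := by
  ext s t
  simp only [tridiag, submatrix_apply, of_apply, Fin.ext_iff, Fin.val_succ]
  split_ifs <;> first | rfl | (exfalso; omega)

lemma det_tridiag_submatrix_succ_succAbove_one (r : ℕ) (b : ℕ → R) :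
    ((tridiag (r + 2) b).submatrix Fin.succ (Fin.succAbove 1)).det =
      -(tridiag r (fun u => b (u + 2))).det := by
  have hminor : ((tridiag (r + 2) b).submatrix Fin.succ (Fin.succAbove 1)).submatrix
      Fin.succ Fin.succ = tridiag r (fun u => b (u + 2)) := by
    ext s t
    simp only [tridiag, submatrix_apply, of_apply, Fin.one_succAbove_succ, Fin.ext_iff, Fin.val_succ]
    split_ifs <;> first | rfl | (exfalso; omega)
  rw [det_succ_column_zero, Fin.sum_univ_succ, Finset.sum_eq_zero, add_zero, Fin.succAbove_zero,
    hminor]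
  · simp [tridiag]
  · intro u _
    simp [tridiag, Fin.ext_iff]

lemma det_tridiag_add_two (r : ℕ) (b : ℕ → R) :
    (tridiag (r + 2) b).det =
      b 1 * (tridiag (r + 1) (fun u => b (u + 1))).det - (tridiag r (fun u => b (u + 2))).det := by
  rw [det_succ_row_zero, Fin.sum_univ_succ, Fin.sum_univ_succ, Finset.sum_eq_zero, add_zero,
    Fin.succAbove_zero, tridiag_submatrix_succ, Fin.succ_zero_eq_one,
    det_tridiag_submatrix_succ_succAbove_one]
  · simp [tridiag]
    ring
  · intro u _
    simp [tridiag, Fin.ext_iff]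

def SatisfiesRecurrence (b : ℕ → R) (r : ℕ) (x : ℕ → R) : Prop :=
  ∀ t, 1 ≤ t → t ≤ r → x (t - 1) + x (t + 1) = b t * x t

lemma SatisfiesRecurrence.shift {b x : ℕ → R} {r : ℕ} (hx : SatisfiesRecurrence b (r + 1) x) :
    SatisfiesRecurrence (fun u => b (u + 1)) r (fun u => x (u + 1)) := by
  intro t ht1 htr
  obtain ⟨s, rfl⟩ : ∃ s, t = s + 1 := ⟨t - 1, by omega⟩
  simpa using hx (s + 2) (by omega) (by omega)

theorem det_tridiag_of_satisfiesRecurrence {r : ℕ} {b x : ℕ → R}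
    (hx : SatisfiesRecurrence b r x) (hr : x r = 1) (hr1 : x (r + 1) = 0) :
    (tridiag r b).det = x 0 := by
  induction r using Nat.strong_induction_on generalizing b x with
  | _ r ih =>
    match r, hx, hr, hr1 with
    | 0, _, hr, _ => simp [hr]
    | 1, hx, hr, hr1 => simpa [tridiag, hr, hr1] using (hx 1 le_rfl le_rfl).symm
    | k + 2, hx, hr, hr1 =>
      rw [det_tridiag_add_two, ih (k + 1) (by omega) hx.shift hr hr1,
        ih k (by omega) hx.shift.shift hr hr1]
      linear_combination -(hx 1 le_rfl (by omega))

lemma SatisfiesRecurrence.casoratian_eq {b x y : ℕ → R} {r : ℕ} (hx : SatisfiesRecurrence b r x)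
    (hy : SatisfiesRecurrence b r y) {t : ℕ} (ht : t ≤ r) :
    x t * y (t + 1) - x (t + 1) * y t = x 0 * y 1 - x 1 * y 0 := by
  induction t with
  | zero => rfl
  | succ t ih =>
    have hxt := hx (t + 1) (by omega) ht
    have hyt := hy (t + 1) (by omega) ht
    rw [Nat.add_sub_cancel] at hxt hyt
    linear_combination ih (by omega) + x (t + 1) * hyt - y (t + 1) * hxt

lemma pad_vecMul_adjugate_tridiag {r : ℕ} (b : ℕ → R) (w : Fin r → R) (t : Fin r) :
    pad (w ᵥ* (tridiag r b).adjugate) t - b (t + 1) * pad (w ᵥ* (tridiag r b).adjugate) (t + 1)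
      + pad (w ᵥ* (tridiag r b).adjugate) (t + 2) = -((tridiag r b).det * w t) := by
  have h : w ᵥ* (tridiag r b).adjugate ᵥ* tridiag r b = (tridiag r b).det • w := by
    rw [vecMul_vecMul, adjugate_mul, vecMul_smul, vecMul_one]
  have ht := congrFun h t
  rw [← mulVec_transpose, tridiag_transpose, tridiag_mulVec_apply] at ht
  rw [Pi.smul_apply, smul_eq_mul] at ht
  linear_combination -ht

lemma sum_Icc_one_eq_sum_fin {M : Type*} [AddCommMonoid M] (r : ℕ) (h : ℕ → M) :
    ∑ s ∈ Finset.Icc 1 r, h s = ∑ s : Fin r, h (s + 1) := by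
  rw [Fin.sum_univ_eq_sum_range (fun s => h (s + 1)), Finset.range_eq_Ico,
    Finset.sum_Ico_add' h, zero_add, Finset.Ico_add_one_right_eq_Icc]

theorem stmt_13_general
    (n q : ℤ) (r : ℕ)
    (hq : 0 < q) (hqn : q < n)
    (i b : ℕ → ℤ)
    (hi0 : i 0 = n)
    (hrec : ∀ t, 1 ≤ t → t ≤ r → i (t - 1) = b t * i t - i (t + 1))
    (hir : i r = 1) (hir1 : i (r + 1) = 0)
    (j : ℕ → ℤ) (hj0 : j 0 = 0) (hj1 : j 1 = 1)
    (hjrec : ∀ t, 1 ≤ t → t ≤ r → j (t + 1) = b t * j t - j (t - 1))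
    (C : Matrix (Fin r) (Fin r) ℤ)
    (hC : ∀ s t : Fin r, C s t =
      if s = t then b (s.1 + 1)
      else if s.1 + 1 = t.1 ∨ t.1 + 1 = s.1 then -1 else 0)
    (η : ℕ → ℕ → ℤ)
    (hη : ∀ s t : Fin r, η (s.1 + 1) (t.1 + 1) = C.adjugate s t)
    (a bb c : ℤ) (f g : ℕ → ℤ)
    (e : ℕ → ℚ)
    (he0 : e 0 = (bb : ℚ)) (her1 : e (r + 1) = (a : ℚ))
    (hedef : ∀ t, 1 ≤ t → t ≤ r →
      e t = ((a : ℚ) * (j t : ℚ) + (bb : ℚ) * (i t : ℚ)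
        + (c : ℚ) * ((n : ℚ) - (i t : ℚ) - (j t : ℚ))
        - ∑ s ∈ Finset.Icc 1 r, ((g s : ℚ) - (f s : ℚ)) * (η s t : ℚ)) / (n : ℚ)) :
    ∀ t, 1 ≤ t → t ≤ r →
      e (t - 1) - (b t : ℚ) * e t + e (t + 1) =
        (g t : ℚ) - (f t : ℚ) - ((b t : ℚ) - 2) * (c : ℚ) := by
  have hn : (n : ℚ) ≠ 0 := by exact_mod_cast (hq.trans hqn).ne'
  have hCb : C = tridiag r b := Matrix.ext hC
  have hi : SatisfiesRecurrence b r i := fun t h1 h2 => by linarith [hrec t h1 h2]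
  have hj : SatisfiesRecurrence b r j := fun t h1 h2 => by linarith [hjrec t h1 h2]
  have hdet : C.det = n := by rw [hCb, det_tridiag_of_satisfiesRecurrence hi hir hir1, hi0]
  have hjr : j (r + 1) = n := by simpa [hi0, hir, hir1, hj0, hj1] using hi.casoratian_eq hj le_rfl
  set w : Fin r → ℤ := fun s => g (s + 1) - f (s + 1)
  set S := pad (w ᵥ* C.adjugate) with hS
  have hne (t : ℕ) (ht : t ≤ r + 1) :
      (n : ℚ) * e t = a * j t + bb * i t + c * (n - i t - j t) - S t := by
    rcases Nat.eq_zero_or_pos t with rfl | ht0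
    · simp [he0, hi0, hj0, hS, pad_zero, mul_comm]
    rcases ht.eq_or_lt with rfl | htr
    · simp [her1, hir1, hjr, hS, pad_of_lt, mul_comm]
    obtain ⟨t, rfl⟩ : ∃ s : Fin r, t = s + 1 := ⟨⟨t - 1, by omega⟩, by simp; omega⟩
    rw [hedef _ ht0 (by omega), mul_div_cancel₀ _ hn, hS, pad_succ, sum_Icc_one_eq_sum_fin]
    simp [w, vecMul, dotProduct, hη]
  intro t ht1 htr
  obtain ⟨t, rfl⟩ : ∃ s : Fin r, t = s + 1 := ⟨⟨t - 1, by omega⟩, by simp; omega⟩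
  have hiQ : (i t : ℚ) + i (t + 2) = b (t + 1) * i (t + 1) := by exact_mod_cast hi (t + 1) ht1 htr
  have hjQ : (j t : ℚ) + j (t + 2) = b (t + 1) * j (t + 1) := by exact_mod_cast hj (t + 1) ht1 htr
  have hSQ : (S t : ℚ) - b (t + 1) * S (t + 1) + S (t + 2) = -(n * (g (t + 1) - f (t + 1))) := by
    have h := pad_vecMul_adjugate_tridiag b w t
    rw [← hCb, hdet] at h
    exact_mod_cast h
  apply mul_left_cancel₀ hn
  simp only [Nat.add_sub_cancel]
  linear_combination hne t (by omega) - (b (t + 1) : ℚ) * hne (t + 1) (by omega) + hne (t + 2) (by omega)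
    + (bb - c : ℚ) * hiQ + (a - c : ℚ) * hjQ - hSQ

/-- The rational numbers e_t defined via adj(C) solve the linear system. -/
theorem stmt_13
    (n q : ℤ) (r : ℕ)
    (hq : 0 < q) (hqn : q < n) (hcop : IsCoprime q n)
    (hr : 1 ≤ r)
    (i b : ℕ → ℤ)
    (hi0 : i 0 = n) (hi1 : i 1 = q)
    (hrec : ∀ t, 1 ≤ t → t ≤ r → i (t - 1) = b t * i t - i (t + 1))
    (hlt : ∀ t, 1 ≤ t → t ≤ r → 0 ≤ i (t + 1) ∧ i (t + 1) < i t)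
    (hir : i r = 1) (hir1 : i (r + 1) = 0)
    (j : ℕ → ℤ) (hj0 : j 0 = 0) (hj1 : j 1 = 1)
    (hjrec : ∀ t, 1 ≤ t → t ≤ r → j (t + 1) = b t * j t - j (t - 1))
    (C : Matrix (Fin r) (Fin r) ℤ)
    (hC : ∀ s t : Fin r, C s t =
      if s = t then b (s.1 + 1)
      else if s.1 + 1 = t.1 ∨ t.1 + 1 = s.1 then -1 else 0)
    (η : ℕ → ℕ → ℤ)
    (hη : ∀ s t : Fin r, η (s.1 + 1) (t.1 + 1) = C.adjugate s t)
    (a bb c : ℤ) (f g : ℕ → ℤ)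
    (e : ℕ → ℚ)
    (he0 : e 0 = (bb : ℚ)) (her1 : e (r + 1) = (a : ℚ))
    (hedef : ∀ t, 1 ≤ t → t ≤ r →
      e t = ((a : ℚ) * (j t : ℚ) + (bb : ℚ) * (i t : ℚ)
        + (c : ℚ) * ((n : ℚ) - (i t : ℚ) - (j t : ℚ))
        - ∑ s ∈ Finset.Icc 1 r, ((g s : ℚ) - (f s : ℚ)) * (η s t : ℚ)) / (n : ℚ)) :
    ∀ t, 1 ≤ t → t ≤ r →
      e (t - 1) - (b t : ℚ) * e t + e (t + 1) =
        (g t : ℚ) - (f t : ℚ) - ((b t : ℚ) - 2) * (c : ℚ) :=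
  stmt_13_general n q r hq hqn i b hi0 hrec hir hir1 j hj0 hj1 hjrec C hC η hη a bb c f g e he0 her1
    hedef
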